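/- arXiv:1406.2544 — 8 statements merged into one kernel-verified Lean document; each statement's English description precedes it below -/
import Mathlib

section
/- Let δ be a strictly increasing function satisfying the involution property and let δ_min be the unique value with δ(-δ_min) = δ_min. For consecutive input transitions at times t_n and t_{n+1} with delays δ_n and δ_{n+1} = δ(t_{n+1} - t_n - δ_n), the cancellation condition δ(t_{n+1} - t_n - δ_n) ≤ -(t_{n+1} - t_n - δ_n) holds if and only if t_{n+1} ≤ t_n + δ_n - δ_min. -/
/-- Cancellation criterion: for a strictly increasing involution delay
function `δ` with fixed point `m` (`δ (-m) = m`), consecutive transitions at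
times `tn`, `tn1` with delays `δn` and `δ (tn1 - tn - δn)` cancel, i.e.
`δ (tn1 - tn - δn) ≤ -(tn1 - tn - δn)`, iff `tn1 ≤ tn + δn - m`. -/
theorem stmt_4 (δ : ℝ → ℝ) (m : ℝ)
    (hm : StrictMono δ) (hfix : δ (-m) = m)
    (tn tn1 δn : ℝ) :
    δ (tn1 - tn - δn) ≤ -(tn1 - tn - δn) ↔ tn1 ≤ tn + δn - m := by
  set T := tn1 - tn - δn with hT
  constructor
  · intro h
    by_contra hc
    push_neg at hc
    have hTm : -m < T := by linarith
    have := hm hTm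
    rw [hfix] at this
    linarith
  · intro h
    have hTm : T ≤ -m := by linarith
    have : δ T ≤ δ (-m) := hm.le_iff_le.mpr hTm
    rw [hfix] at this
    linarith
end

section
/- Define δ↑(T) = τ·ln(1 - e^{-(T + T_p - τ·ln(V_th))/τ}) + T_p - τ·ln(1 - V_th) and δ↓(T) = τ·ln(1 - e^{-(T + T_p - τ·ln(1 - V_th))/τ}) + T_p - τ·ln(V_th), for τ > 0 and 0 < V_th < 1. Then -δ↑(-δ↓(T)) = T and -δ↓(-δ↑(T)) = T for all T in the respective domains. -/
/-- Rising delay function of an exp-channel. -/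
noncomputable def deltaUp (τ Tp Vth T : ℝ) : ℝ :=
  τ * Real.log (1 - Real.exp (-(T + Tp - τ * Real.log Vth) / τ)) +
    Tp - τ * Real.log (1 - Vth)

/-- Falling delay function of an exp-channel. -/
noncomputable def deltaDown (τ Tp Vth T : ℝ) : ℝ :=
  τ * Real.log (1 - Real.exp (-(T + Tp - τ * Real.log (1 - Vth)) / τ)) +
    Tp - τ * Real.log Vth

lemma key_inv (τ Tp a b T : ℝ) (hτ : 0 < τ) (hT : -(Tp - τ * b) < T) :
    -(τ * Real.log (1 - Real.exp
        (-(-(τ * Real.log (1 - Real.exp (-(T + Tp - τ * b) / τ)) + Tp - τ * a)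
          + Tp - τ * a) / τ)) + Tp - τ * b) = T := by
  have hA : 0 < T + Tp - τ * b := by linarith
  set u : ℝ := Real.exp (-(T + Tp - τ * b) / τ) with hu
  have hupos : 0 < u := Real.exp_pos _
  have hult : u < 1 := by
    rw [hu, Real.exp_lt_one_iff]
    apply div_neg_of_neg_of_pos (by linarith) hτ
  have h1 : (-(-(τ * Real.log (1 - u) + Tp - τ * a) + Tp - τ * a) / τ)
      = Real.log (1 - u) := by
    field_simp
    ring
  rw [h1, Real.exp_log (by linarith)]
  have h2 : 1 - (1 - u) = u := by ring
  rw [h2, hu, Real.log_exp]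
  field_simp
  ring

/-- The exp-channel delay functions satisfy the involution property
on their respective domains. -/
theorem stmt_5 (τ Tp Vth : ℝ) (hτ : 0 < τ) (hV : Vth ∈ Set.Ioo (0:ℝ) 1) :
    (∀ T : ℝ, -(Tp - τ * Real.log (1 - Vth)) < T →
      -deltaUp τ Tp Vth (-deltaDown τ Tp Vth T) = T) ∧
    (∀ T : ℝ, -(Tp - τ * Real.log Vth) < T →
      -deltaDown τ Tp Vth (-deltaUp τ Tp Vth T) = T) := by
  constructor
  · intro T hT
    simpa [deltaUp, deltaDown] using
      key_inv τ Tp (Real.log Vth) (Real.log (1 - Vth)) T hτ hT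
  · intro T hT
    simpa [deltaUp, deltaDown] using
      key_inv τ Tp (Real.log (1 - Vth)) (Real.log Vth) T hτ hT
end

section
/- For an exp-channel with τ > 0, V_th ∈ (0,1), and T_p > 0, the unique fixed point δ_min with δ↑(-δ_min) = δ_min equals T_p. -/
open Real

lemma deltaUp_neg {τ Vth : ℝ} (hτ : τ ≠ 0) (hV : 0 < Vth) (Tp m : ℝ) :
    deltaUp τ Tp Vth (-m) =
      Tp + τ * (log (1 - Vth * exp ((m - Tp) / τ)) - log (1 - Vth)) := by
  have hexponent : -(-m + Tp - τ * log Vth) / τ = log Vth + (m - Tp) / τ := by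
    field_simp
    ring
  rw [deltaUp, hexponent, exp_add, exp_log hV]
  ring

lemma log_one_sub_mul_exp_sub_log_one_sub_eq_iff {V u : ℝ} (hV : V < 1) (hVu : V * exp u < 1) :
    log (1 - V * exp u) - log (1 - V) = u ↔ u = 0 := by
  constructor
  · intro h
    have hlog : log (1 - V * exp u) = log ((1 - V) * exp u) := by
      rw [log_mul (by linarith) (exp_ne_zero u), log_exp]
      linarith
    have hmul : 1 - V * exp u = (1 - V) * exp u :=
      log_injOn_pos (by simpa using hVu) (by simp only [Set.mem_Ioi]; positivity) hlog
    have hexp : exp u = 1 := by linarith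
    simpa using hexp
  · rintro rfl
    simp

theorem stmt_7_general (τ Tp Vth : ℝ) (hτ : 0 < τ) (hV : Vth ∈ Set.Ioo (0:ℝ) 1) :
    deltaUp τ Tp Vth (-Tp) = Tp ∧
      ∀ m : ℝ, 0 < m → 0 < -m + Tp - τ * Real.log Vth →
        deltaUp τ Tp Vth (-m) = m → m = Tp := by
  obtain ⟨hV0, hV1⟩ := hV
  refine ⟨by simp [deltaUp_neg hτ.ne' hV0], fun m _ hcausal hfix => ?_⟩
  have hlt : Vth * exp ((m - Tp) / τ) < 1 := by
    have hneg : log Vth + (m - Tp) / τ < 0 := by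
      have hexponent : log Vth + (m - Tp) / τ = -(-m + Tp - τ * log Vth) / τ := by
        field_simp
        ring
      rw [hexponent]
      exact div_neg_of_neg_of_pos (by linarith) hτ
    simpa [exp_add, exp_log hV0] using Real.exp_lt_one_iff.mpr hneg
  rw [deltaUp_neg hτ.ne' hV0] at hfix
  have hfix_log : log (1 - Vth * exp ((m - Tp) / τ)) - log (1 - Vth) = (m - Tp) / τ := by
    rw [eq_div_iff hτ.ne']
    linarith
  have hu := (log_one_sub_mul_exp_sub_log_one_sub_eq_iff hV1 hlt).mp hfix_log
  rw [div_eq_zero_iff, sub_eq_zero] at hu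
  exact hu.resolve_right hτ.ne'

/-- For a strictly causal exp-channel, the unique fixed point `δ_min` with
`δ↑(-δ_min) = δ_min` equals `T_p`. -/
theorem stmt_7 (τ Tp Vth : ℝ) (hτ : 0 < τ) (hV : Vth ∈ Set.Ioo (0:ℝ) 1)
    (hTp : 0 < Tp) :
    deltaUp τ Tp Vth (-Tp) = Tp ∧
      ∀ m : ℝ, 0 < m → 0 < -m + Tp - τ * Real.log Vth →
        deltaUp τ Tp Vth (-m) = m → m = Tp :=
  stmt_7_general τ Tp Vth hτ hV
end

section
/- The exp-channel delay function δ↑(T) = τ·ln(1 - e^{-(T + T_p - τ·ln(V_th))/τ}) + T_p - τ·ln(1 - V_th) is strictly increasing and strictly concave on its domain, and lim_{T→∞} δ↑(T) = T_p - τ·ln(1 - V_th). -/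
/-!
Up to a translation of the argument and an additive constant, `δ↑` is
`g(x) = τ·ln(1 - e^{-x/τ})` on `x > 0`. Its derivative `g'(x) = 1/(e^{x/τ} - 1)` is positive
and strictly decreasing, which gives strict monotonicity and strict concavity, and
`g(x) → τ·ln 1 = 0` as `x → ∞`.
-/

open Real Set Filter Topology

noncomputable def expChannelShape (τ x : ℝ) : ℝ :=
  τ * log (1 - exp (-x / τ))

section expChannelShape

variable {τ x : ℝ}

lemma exp_neg_div_lt_one (hτ : 0 < τ) (hx : 0 < x) : exp (-x / τ) < 1 :=
  exp_lt_one_iff.2 (div_neg_of_neg_of_pos (neg_neg_of_pos hx) hτ)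

lemma exp_div_sub_one_pos (hτ : 0 < τ) (hx : 0 < x) : 0 < exp (x / τ) - 1 :=
  sub_pos.2 (one_lt_exp_iff.2 (div_pos hx hτ))

lemma hasDerivAt_expChannelShape (hτ : 0 < τ) (hx : 0 < x) :
    HasDerivAt (expChannelShape τ) (1 / (exp (x / τ) - 1)) x := by
  have hexp : HasDerivAt (fun x => exp (-x / τ)) (exp (-x / τ) * (-1 / τ)) x :=
    ((hasDerivAt_neg x).div_const τ).exp
  have hpos : 0 < 1 - exp (-x / τ) := sub_pos.2 (exp_neg_div_lt_one hτ hx)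
  unfold expChannelShape
  refine (((hexp.const_sub 1).log hpos.ne').const_mul τ).congr_deriv ?_
  rw [neg_div τ x, exp_neg]
  field_simp

lemma continuousOn_expChannelShape (hτ : 0 < τ) : ContinuousOn (expChannelShape τ) (Ioi 0) :=
  fun _ hx => (hasDerivAt_expChannelShape hτ hx).continuousAt.continuousWithinAt

lemma strictMonoOn_expChannelShape (hτ : 0 < τ) : StrictMonoOn (expChannelShape τ) (Ioi 0) := by
  refine strictMonoOn_of_deriv_pos (convex_Ioi 0) (continuousOn_expChannelShape hτ) ?_
  intro x hx
  rw [interior_Ioi] at hx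
  rw [(hasDerivAt_expChannelShape hτ hx).deriv]
  exact one_div_pos.2 (exp_div_sub_one_pos hτ hx)

lemma strictConcaveOn_expChannelShape (hτ : 0 < τ) :
    StrictConcaveOn ℝ (Ioi 0) (expChannelShape τ) := by
  refine StrictAntiOn.strictConcaveOn_of_deriv (convex_Ioi 0)
    (continuousOn_expChannelShape hτ) ?_
  rw [interior_Ioi]
  intro x hx y hy hxy
  rw [(hasDerivAt_expChannelShape hτ hx).deriv, (hasDerivAt_expChannelShape hτ hy).deriv]
  exact one_div_lt_one_div_of_lt (exp_div_sub_one_pos hτ hx) (by gcongr)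

lemma tendsto_expChannelShape_atTop (hτ : 0 < τ) :
    Tendsto (expChannelShape τ) atTop (𝓝 0) := by
  unfold expChannelShape
  have hexp : Tendsto (fun x => exp (-x / τ)) atTop (𝓝 0) :=
    tendsto_exp_atBot.comp (tendsto_neg_atTop_atBot.atBot_div_const hτ)
  simpa using ((hexp.const_sub 1).log (by norm_num)).const_mul τ

end expChannelShape

lemma deltaUp_eq (τ Tp Vth T : ℝ) :
    deltaUp τ Tp Vth T =
      expChannelShape τ (T + (Tp - τ * log Vth)) + (Tp - τ * log (1 - Vth)) := by
  rw [deltaUp, expChannelShape]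
  ring_nf

theorem stmt_8_general (τ Tp Vth : ℝ) (hτ : 0 < τ) :
    StrictMonoOn (deltaUp τ Tp Vth) {T | 0 < T + Tp - τ * Real.log Vth} ∧
    StrictConcaveOn ℝ {T | 0 < T + Tp - τ * Real.log Vth} (deltaUp τ Tp Vth) ∧
    Filter.Tendsto (deltaUp τ Tp Vth) Filter.atTop
      (nhds (Tp - τ * Real.log (1 - Vth))) := by
  have hdom : {T | 0 < T + Tp - τ * log Vth} = (fun T => (Tp - τ * log Vth) + T) ⁻¹' Ioi 0 := by
    ext T
    change 0 < T + Tp - τ * log Vth ↔ 0 < Tp - τ * log Vth + T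
    constructor <;> intro h <;> linarith
  have hfun : deltaUp τ Tp Vth =
      fun T => expChannelShape τ (T + (Tp - τ * log Vth)) + (Tp - τ * log (1 - Vth)) :=
    funext (deltaUp_eq τ Tp Vth)
  rw [hdom, hfun]
  refine ⟨fun a ha b hb hab => ?_,
    ((strictConcaveOn_expChannelShape hτ).translate_left _).add_const _, ?_⟩
  · exact add_lt_add_of_lt_of_le (strictMonoOn_expChannelShape hτ (by rw [add_comm]; exact ha)
      (by rw [add_comm]; exact hb) (by linarith)) le_rfl
  · simpa only [zero_add, Function.comp_def, id] using ((tendsto_expChannelShape_atTop hτ).comp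
      (tendsto_atTop_add_const_right _ _ tendsto_id)).add_const (Tp - τ * log (1 - Vth))

/-- The exp-channel delay function `δ↑` is strictly increasing and strictly
concave on its domain `{T | 0 < T + Tp - τ·ln Vth}`, and it tends to
`Tp - τ·ln (1 - Vth)` as `T → ∞`. -/
theorem stmt_8 (τ Tp Vth : ℝ) (hτ : 0 < τ) (hV : Vth ∈ Set.Ioo (0:ℝ) 1) :
    StrictMonoOn (deltaUp τ Tp Vth) {T | 0 < T + Tp - τ * Real.log Vth} ∧
    StrictConcaveOn ℝ {T | 0 < T + Tp - τ * Real.log Vth} (deltaUp τ Tp Vth) ∧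
    Filter.Tendsto (deltaUp τ Tp Vth) Filter.atTop
      (nhds (Tp - τ * Real.log (1 - Vth))) :=
  stmt_8_general τ Tp Vth hτ
end

section
/- Let δ be a symmetric strictly causal involution delay function and define f(Δ) = δ(Δ - δ(-Δ)) + Δ - δ(-Δ). If δ is differentiable, then for all Δ > 0 in the domain, f'(Δ) ≥ 1 + δ'(0), and consequently |f(Δ) - Δ̃| ≥ (1 + δ'(0))·|Δ - Δ̃| for any fixed point Δ̃ of f in the same interval as Δ. -/
/-!
Writing `f Δ = δ (g Δ) + g Δ` with `g Δ = Δ - δ (-Δ)`, the chain rule gives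
`f' Δ = (δ' (g Δ) + 1) (1 + δ' (-Δ))`. Monotonicity makes both `δ'`-values nonnegative and
concavity makes `δ'` antitone, so `δ' (-Δ) ≥ δ' 0` for `Δ > 0`; hence `f' ≥ 1 + δ' 0` on
`(0, ∞)`, and the mean value theorem turns this into the expansion estimate around a fixed point.
-/

open Set

lemma hasDerivAt_sub_comp_neg {δ : ℝ → ℝ} {δ' x : ℝ} (hδ : HasDerivAt δ δ' (-x)) :
    HasDerivAt (fun y => y - δ (-y)) (1 + δ') x :=
  ((hasDerivAt_id' x).sub (hδ.comp x (hasDerivAt_neg' x))).congr_deriv (by ring)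

lemma hasDerivAt_comp_sub_comp_neg_add {δ : ℝ → ℝ} (hδ : Differentiable ℝ δ) (x : ℝ) :
    HasDerivAt (fun y => δ (y - δ (-y)) + y - δ (-y))
      ((deriv δ (x - δ (-x)) + 1) * (1 + deriv δ (-x))) x := by
  have hg := hasDerivAt_sub_comp_neg (hδ (-x)).hasDerivAt
  simp only [add_sub_assoc]
  exact (((hδ _).hasDerivAt.comp x hg).add hg).congr_deriv (by ring)

lemma one_add_deriv_zero_le_of_concaveOn {δ : ℝ → ℝ} (hm : Monotone δ)
    (hc : ConcaveOn ℝ univ δ) (hd : Differentiable ℝ δ) {x : ℝ} (hx : 0 < x) :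
    1 + deriv δ 0 ≤ (deriv δ (x - δ (-x)) + 1) * (1 + deriv δ (-x)) := by
  have hanti : deriv δ 0 ≤ deriv δ (-x) :=
    hc.antitoneOn_deriv (fun y _ => hd y) trivial trivial (by linarith)
  have hpos₁ : 0 ≤ deriv δ (x - δ (-x)) := hm.deriv_nonneg
  have hpos₂ : 0 ≤ deriv δ (-x) := hm.deriv_nonneg
  nlinarith

lemma Convex.mul_abs_sub_le_abs_image_sub {D : Set ℝ} (hD : Convex ℝ D) {f : ℝ → ℝ}
    (hf : ContinuousOn f D) (hf' : DifferentiableOn ℝ f (interior D)) {C : ℝ}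
    (hf'_ge : ∀ x ∈ interior D, C ≤ deriv f x) {x y : ℝ} (hx : x ∈ D) (hy : y ∈ D) :
    C * |x - y| ≤ |f x - f y| := by
  have hgrowth := hD.mul_sub_le_image_sub_of_le_deriv hf hf' hf'_ge
  rcases le_total x y with hxy | hyx
  · rw [abs_sub_comm x, abs_sub_comm (f x), abs_of_nonneg (sub_nonneg.2 hxy)]
    exact (hgrowth x hx y hy hxy).trans (le_abs_self _)
  · rw [abs_of_nonneg (sub_nonneg.2 hyx)]
    exact (hgrowth y hy x hx hyx).trans (le_abs_self _)

theorem stmt_9_general (δ : ℝ → ℝ)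
    (hm : StrictMono δ) (hc : ConcaveOn ℝ Set.univ δ)
    (hd : Differentiable ℝ δ)
    (f : ℝ → ℝ) (hf : ∀ Δ, f Δ = δ (Δ - δ (-Δ)) + Δ - δ (-Δ)) :
    (∀ Δ : ℝ, 0 < Δ → 1 + deriv δ 0 ≤ deriv f Δ) ∧
      ∀ Δt : ℝ, 0 < Δt → f Δt = Δt → ∀ Δ : ℝ, 0 < Δ →
        (1 + deriv δ 0) * |Δ - Δt| ≤ |f Δ - Δt| := by
  have hderiv : ∀ x, HasDerivAt f ((deriv δ (x - δ (-x)) + 1) * (1 + deriv δ (-x))) x :=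
    funext hf ▸ hasDerivAt_comp_sub_comp_neg_add hd
  have hbound : ∀ Δ : ℝ, 0 < Δ → 1 + deriv δ 0 ≤ deriv f Δ := fun Δ hΔ =>
    (hderiv Δ).deriv ▸ one_add_deriv_zero_le_of_concaveOn hm.monotone hc hd hΔ
  refine ⟨hbound, fun Δt hΔt hfix Δ hΔ => ?_⟩
  have hfd : Differentiable ℝ f := fun x => (hderiv x).differentiableAt
  have hexp := (convex_Ioi (0 : ℝ)).mul_abs_sub_le_abs_image_sub hfd.continuous.continuousOn
    hfd.differentiableOn (fun x hx => hbound x (by rwa [interior_Ioi] at hx)) hΔ hΔt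
  rwa [hfix] at hexp

/-- For a symmetric strictly causal involution delay function `δ` and
`f Δ = δ (Δ - δ (-Δ)) + Δ - δ (-Δ)`, one has `f' Δ ≥ 1 + δ' 0` for `Δ > 0`,
and consequently `|f Δ - Δ̃| ≥ (1 + δ' 0)·|Δ - Δ̃|` for any positive fixed
point `Δ̃` of `f`. -/
theorem stmt_9 (δ : ℝ → ℝ)
    (hm : StrictMono δ) (hc : ConcaveOn ℝ Set.univ δ)
    (hd : Differentiable ℝ δ)
    (hinv : ∀ T, -δ (-δ T) = T) (h0 : 0 < δ 0)
    (f : ℝ → ℝ) (hf : ∀ Δ, f Δ = δ (Δ - δ (-Δ)) + Δ - δ (-Δ)) :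
    (∀ Δ : ℝ, 0 < Δ → 1 + deriv δ 0 ≤ deriv f Δ) ∧
      ∀ Δt : ℝ, 0 < Δt → f Δt = Δt → ∀ Δ : ℝ, 0 < Δ →
        (1 + deriv δ 0) * |Δ - Δt| ≤ |f Δ - Δt| :=
  stmt_9_general δ hm hc hd f hf
end

section
/- Let δ be a symmetric strictly causal involution delay function. Then there exists a unique Δ̃₁ > 0 with δ(-Δ̃₁) = 2Δ̃₁, and moreover Δ̃₁ < δ(0). -/
/-- For a symmetric strictly causal involution delay function `δ`, there is a
unique `Δ̃₁ > 0` with `δ (-Δ̃₁) = 2·Δ̃₁`, and moreover `Δ̃₁ < δ 0`. -/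
theorem stmt_10 (δ : ℝ → ℝ)
    (hm : StrictMono δ) (hc : ConcaveOn ℝ Set.univ δ) (hcont : Continuous δ)
    (hinv : ∀ T, -δ (-δ T) = T) (h0 : 0 < δ 0) :
    (∃! Δ : ℝ, 0 < Δ ∧ δ (-Δ) = 2 * Δ) ∧
      ∀ Δ : ℝ, 0 < Δ → δ (-Δ) = 2 * Δ → Δ < δ 0 := by
  set g : ℝ → ℝ := fun Δ => δ (-Δ) - 2 * Δ with hg
  have hga : StrictAnti g := by
    intro a b hab
    have : δ (-b) < δ (-a) := hm (by linarith)
    simp only [hg]; linarith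
  have hgc : Continuous g := by
    continuity
  have hδδ0 : δ (-δ 0) = 0 := by have := hinv 0; linarith
  have hg0 : 0 < g 0 := by simp [hg, h0]
  have hgd : g (δ 0) < 0 := by simp only [hg]; rw [hδδ0]; linarith
  have hsub := intermediate_value_Icc' (le_of_lt h0) hgc.continuousOn
  have h0mem : (0:ℝ) ∈ Set.Icc (g (δ 0)) (g 0) := ⟨le_of_lt hgd, le_of_lt hg0⟩
  obtain ⟨Δ, hΔmem, hΔ0⟩ := hsub h0mem
  have hΔpos : 0 < Δ := by
    by_contra h
    push_neg at h
    rcases eq_or_lt_of_le h with h | h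
    · rw [← h] at hg0; linarith [hΔ0]
    · have := hga h; linarith [hΔ0]
  have hΔlt : Δ < δ 0 := by
    by_contra h
    push_neg at h
    rcases eq_or_lt_of_le h with h | h
    · rw [h] at hgd; linarith
    · have := hga h; linarith
  have hΔeq : δ (-Δ) = 2 * Δ := by
    have : g Δ = 0 := hΔ0
    simp only [hg] at this; linarith
  refine ⟨⟨Δ, ⟨hΔpos, hΔeq⟩, ?_⟩, ?_⟩
  · rintro y ⟨hy0, hyeq⟩
    have hy : g y = 0 := by simp only [hg]; linarith
    have hΔ : g Δ = 0 := hΔ0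
    by_contra hne
    rcases lt_or_gt_of_ne hne with h | h
    · have := hga h; rw [hy, hΔ] at this; exact lt_irrefl 0 this
    · have := hga h; rw [hy, hΔ] at this; exact lt_irrefl 0 this
  · intro y hy0 hyeq
    by_contra h
    push_neg at h
    have hgy : g y = 0 := by simp only [hg]; linarith
    rcases eq_or_lt_of_le h with h | h
    · rw [← h] at hgy; linarith
    · have := hga h; rw [hgy] at this; linarith
end

section
/- For V_th ∈ (0,1) and τ > 0, the function h(Δ) = V_th·e^{-Δ/(V_th·τ)} + (1 - V_th)·e^{Δ/τ} has h'(Δ) = -(1/τ)·e^{-Δ/(V_th·τ)} + ((1 - V_th)/τ)·e^{Δ/τ}, and the unique root of h' is Δ_τ = -τ·ln(1 - V_th)/(1 + 1/V_th). Moreover h'(Δ) ≤ 0 for all 0 ≤ Δ ≤ Δ_τ, and hence h(Δ) ≤ 1 on [0, Δ_τ]. -/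
/-!
`h'` is strictly increasing, as the sum of an increasing exponential and the negative of a
decreasing one, and it vanishes at `Δ_τ`: taking logarithms, `(1 - V) e^{Δ/τ} = e^{-Δ/(Vτ)}`
is a linear equation in `Δ`. Hence `h' ≤ 0` exactly on `(-∞, Δ_τ]`, where `h` is therefore
antitone, so `h Δ ≤ h 0 = 1` for `0 ≤ Δ ≤ Δ_τ`.
-/

open Real Set

namespace HighThreshold

variable (V τ : ℝ)

noncomputable def h (Δ : ℝ) : ℝ :=
  V * exp (-Δ / (V * τ)) + (1 - V) * exp (Δ / τ)

noncomputable def h' (Δ : ℝ) : ℝ :=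
  -(1 / τ) * exp (-Δ / (V * τ)) + ((1 - V) / τ) * exp (Δ / τ)

noncomputable def Δτ : ℝ :=
  -(τ * log (1 - V)) / (1 + 1 / V)

variable {V τ}

theorem h_zero : h V τ 0 = 1 := by
  simp [h]

theorem hasDerivAt_h (hV : V ≠ 0) (Δ : ℝ) : HasDerivAt (h V τ) (h' V τ Δ) Δ := by
  have hdecay := ((hasDerivAt_id Δ).neg.div_const (V * τ)).exp.const_mul V
  have hgrowth := ((hasDerivAt_id Δ).div_const τ).exp.const_mul (1 - V)
  refine (hdecay.add hgrowth).congr_deriv ?_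
  simp only [h', Pi.neg_apply, id]
  field_simp

theorem strictMono_h' (hV₀ : 0 < V) (hV₁ : V ≤ 1) (hτ : 0 < τ) : StrictMono (h' V τ) := by
  have hdecay : StrictMono fun Δ => -(1 / τ) * exp (-Δ / (V * τ)) := by
    intro x y hxy
    refine mul_lt_mul_of_neg_left (exp_lt_exp.2 ?_) (by simpa using hτ)
    gcongr
  have hgrowth : Monotone fun Δ => ((1 - V) / τ) * exp (Δ / τ) := by
    intro x y hxy
    have : 0 ≤ (1 - V) / τ := div_nonneg (by linarith) hτ.le
    dsimp only
    gcongr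
  exact hdecay.add_monotone hgrowth

theorem h'_Δτ (hV₀ : 0 < V) (hV₁ : V < 1) (hτ : τ ≠ 0) : h' V τ (Δτ V τ) = 0 := by
  have hexp : log (1 - V) + Δτ V τ / τ = -Δτ V τ / (V * τ) := by
    simp only [Δτ]
    field_simp
    ring
  have : (1 - V) * exp (Δτ V τ / τ) = exp (-Δτ V τ / (V * τ)) := by
    rw [← hexp, exp_add, exp_log (by linarith)]
  simp only [h']
  rw [div_mul_eq_mul_div, this]
  ring

section

variable (hV₀ : 0 < V) (hV₁ : V < 1) (hτ : 0 < τ)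
include hV₀ hV₁ hτ

theorem h'_nonpos_iff {Δ : ℝ} : h' V τ Δ ≤ 0 ↔ Δ ≤ Δτ V τ := by
  rw [← h'_Δτ hV₀ hV₁ hτ.ne']
  exact (strictMono_h' hV₀ hV₁.le hτ).le_iff_le

theorem h'_eq_zero_iff {Δ : ℝ} : h' V τ Δ = 0 ↔ Δ = Δτ V τ := by
  rw [← h'_Δτ hV₀ hV₁ hτ.ne']
  exact (strictMono_h' hV₀ hV₁.le hτ).injective.eq_iff

theorem antitoneOn_h : AntitoneOn (h V τ) (Iic (Δτ V τ)) := by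
  have hderiv := hasDerivAt_h (τ := τ) hV₀.ne'
  refine antitoneOn_of_hasDerivWithinAt_nonpos (convex_Iic _)
    (fun Δ _ => (hderiv Δ).continuousAt.continuousWithinAt)
    (fun Δ _ => (hderiv Δ).hasDerivWithinAt) fun Δ hΔ => ?_
  rw [interior_Iic] at hΔ
  exact (h'_nonpos_iff hV₀ hV₁ hτ).2 (le_of_lt hΔ)

theorem h_le_one {Δ : ℝ} (hΔ : Δ ∈ Icc 0 (Δτ V τ)) : h V τ Δ ≤ 1 :=
  h_zero (V := V) (τ := τ) ▸ antitoneOn_h hV₀ hV₁ hτ (hΔ.1.trans hΔ.2) hΔ.2 hΔ.1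

end

end HighThreshold

open HighThreshold

/-- For `h Δ = Vth·e^{-Δ/(Vth·τ)} + (1 - Vth)·e^{Δ/τ}`, the derivative is
`h' Δ = -(1/τ)·e^{-Δ/(Vth·τ)} + ((1-Vth)/τ)·e^{Δ/τ}`, its unique root is
`Δ_τ = -τ·ln(1 - Vth)/(1 + 1/Vth)`, and `h' ≤ 0` hence `h ≤ 1` on `[0, Δ_τ]`. -/
theorem stmt_13 (Vth τ : ℝ) (hV : Vth ∈ Set.Ioo (0:ℝ) 1) (hτ : 0 < τ)
    (h : ℝ → ℝ)
    (hh : ∀ Δ, h Δ = Vth * Real.exp (-Δ / (Vth * τ)) +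
      (1 - Vth) * Real.exp (Δ / τ)) :
    (∀ Δ, deriv h Δ = -(1 / τ) * Real.exp (-Δ / (Vth * τ)) +
      ((1 - Vth) / τ) * Real.exp (Δ / τ)) ∧
    deriv h (-(τ * Real.log (1 - Vth)) / (1 + 1 / Vth)) = 0 ∧
    (∀ Δ, deriv h Δ = 0 → Δ = -(τ * Real.log (1 - Vth)) / (1 + 1 / Vth)) ∧
    (∀ Δ ∈ Set.Icc (0:ℝ) (-(τ * Real.log (1 - Vth)) / (1 + 1 / Vth)),
      deriv h Δ ≤ 0) ∧
    (∀ Δ ∈ Set.Icc (0:ℝ) (-(τ * Real.log (1 - Vth)) / (1 + 1 / Vth)),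
      h Δ ≤ 1) := by
  obtain ⟨hV₀, hV₁⟩ := hV
  obtain rfl : h = HighThreshold.h Vth τ := funext hh
  have hderiv (Δ : ℝ) : deriv (HighThreshold.h Vth τ) Δ = h' Vth τ Δ :=
    (hasDerivAt_h hV₀.ne' Δ).deriv
  simp only [hderiv]
  exact ⟨fun _ => rfl, h'_Δτ hV₀ hV₁ hτ.ne', fun _ => (h'_eq_zero_iff hV₀ hV₁ hτ).1,
    fun _ hΔ => (h'_nonpos_iff hV₀ hV₁ hτ).2 hΔ.2, fun _ => h_le_one hV₀ hV₁ hτ⟩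
end

section
/- Let g(Δ₀) = Δ₀ - δ∞ + δ(Δ₀ - δ∞) where δ is a symmetric strictly causal involution delay function with limit δ∞. Then g is strictly increasing and differentiable on (δ∞ - δ_min, δ∞) with g'(Δ₀) ≥ 1 + δ'(0), and g(Δ₀) → 0 as Δ₀ → δ∞ - δ_min and g(Δ₀) → δ(0) as Δ₀ → δ∞. Consequently, for every value v ∈ (0, δ(0)) there is a unique Δ₀ ∈ (δ∞ - δ_min, δ∞) with g(Δ₀) = v. -/
/-! The first loop pulse length is `y ↦ y + δ y` read at `y = Δ₀ - δ∞`, so its derivative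
is `1 + δ'`, which concavity bounds below by `1 + δ' 0` on `(-δ_min, 0)`. At the two ends
`y = -δ_min` and `y = 0` it takes the values `-δ_min + δ (-δ_min) = 0` and `δ 0`, and
strict monotonicity plus the intermediate value theorem give the unique preimage. -/

open Set

theorem hasDerivAt_sub_add_comp_sub {δ : ℝ → ℝ} {c x : ℝ}
    (hδ : DifferentiableAt ℝ δ (x - c)) :
    HasDerivAt (fun x => x - c + δ (x - c)) (1 + deriv δ (x - c)) x := by
  have hshift : HasDerivAt (fun x : ℝ => x - c) 1 x := (hasDerivAt_id x).sub_const c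
  have hcomp : HasDerivAt (fun x => δ (x - c)) (deriv δ (x - c) * 1) x :=
    hδ.hasDerivAt.comp x hshift
  rw [mul_one] at hcomp
  exact hshift.add hcomp

theorem StrictMonoOn.existsUnique_mem_Ioo_eq {f : ℝ → ℝ} {a b v : ℝ} (hab : a ≤ b)
    (hmono : StrictMonoOn f (Ioo a b)) (hcont : ContinuousOn f (Icc a b))
    (hv : v ∈ Ioo (f a) (f b)) : ∃! x, x ∈ Ioo a b ∧ f x = v := by
  obtain ⟨x, hx, rfl⟩ := intermediate_value_Ioo hab hcont hv
  exact ⟨x, ⟨hx, rfl⟩, fun y ⟨hy, hyx⟩ => hmono.injOn hy hx hyx⟩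

theorem stmt_17_general (δ : ℝ → ℝ) (dInf m : ℝ)
    (hm0 : 0 < m) (hmd : m < dInf)
    (hmono : StrictMonoOn δ (Set.Ioi (-dInf)))
    (hconc : ConcaveOn ℝ (Set.Ioi (-dInf)) δ)
    (hdiff : DifferentiableOn ℝ δ (Set.Ioi (-dInf)))
    (hfix : δ (-m) = m)
    (g : ℝ → ℝ) (hg : ∀ x, g x = x - dInf + δ (x - dInf)) :
    StrictMonoOn g (Set.Ioo (dInf - m) dInf) ∧
    DifferentiableOn ℝ g (Set.Ioo (dInf - m) dInf) ∧
    (∀ x ∈ Set.Ioo (dInf - m) dInf, 1 + deriv δ 0 ≤ deriv g x) ∧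
    Filter.Tendsto g (nhdsWithin (dInf - m) (Set.Ioi (dInf - m))) (nhds 0) ∧
    Filter.Tendsto g (nhdsWithin dInf (Set.Iio dInf)) (nhds (δ 0)) ∧
    (∀ v ∈ Set.Ioo 0 (δ 0), ∃! x : ℝ, x ∈ Set.Ioo (dInf - m) dInf ∧ g x = v) := by
  have hshift : ∀ x, dInf - m ≤ x → x - dInf ∈ Ioi (-dInf) := fun x hx => by
    rw [mem_Ioi]; linarith
  have hderiv : ∀ x, dInf - m ≤ x → HasDerivAt g (1 + deriv δ (x - dInf)) x := fun x hx =>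
    funext hg ▸ hasDerivAt_sub_add_comp_sub
      (hdiff.differentiableAt (isOpen_Ioi.mem_nhds (hshift x hx)))
  have hcont : ∀ x, dInf - m ≤ x → ContinuousAt g x := fun x hx => (hderiv x hx).continuousAt
  have hgmono : StrictMonoOn g (Ioo (dInf - m) dInf) := fun x hx y hy hxy => by
    rw [hg, hg]
    exact add_lt_add (sub_lt_sub_right hxy dInf)
      (hmono (hshift x hx.1.le) (hshift y hy.1.le) (sub_lt_sub_right hxy dInf))
  have hgleft : g (dInf - m) = 0 := by simp [hg, hfix]
  have hgright : g dInf = δ 0 := by simp [hg]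
  have hab : dInf - m ≤ dInf := by linarith
  refine ⟨hgmono, fun x hx => (hderiv x hx.1.le).differentiableAt.differentiableWithinAt,
    fun x hx => ?_, ?_, ?_, fun v hv => ?_⟩
  · have hδ'_le : deriv δ 0 ≤ deriv δ (x - dInf) :=
      hconc.antitoneOn_deriv (fun u hu => hdiff.differentiableAt (isOpen_Ioi.mem_nhds hu))
        (hshift x hx.1.le) (show (0 : ℝ) ∈ Ioi (-dInf) by rw [mem_Ioi]; linarith)
        (by linarith [hx.2])
    rw [(hderiv x hx.1.le).deriv]
    linarith
  · exact hgleft ▸ (hcont _ le_rfl).tendsto.mono_left nhdsWithin_le_nhds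
  · exact hgright ▸ (hcont _ hab).tendsto.mono_left nhdsWithin_le_nhds
  · exact hgmono.existsUnique_mem_Ioo_eq hab (fun x hx => (hcont x hx.1).continuousWithinAt)
      (by rwa [hgleft, hgright])

/-- For a symmetric strictly causal involution delay function
`δ : (-δ∞, ∞) → (-∞, δ∞)` with limit `δ∞` and fixed point `m = δ_min`, the
function `g Δ₀ = Δ₀ - δ∞ + δ (Δ₀ - δ∞)` is strictly increasing and
differentiable on `(δ∞ - m, δ∞)` with `g' ≥ 1 + δ' 0`, tends to `0` at
`δ∞ - m` and to `δ 0` at `δ∞`; hence every `v ∈ (0, δ 0)` has a unique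
preimage in `(δ∞ - m, δ∞)`. -/
theorem stmt_17 (δ : ℝ → ℝ) (dInf m : ℝ)
    (hm0 : 0 < m) (hmd : m < dInf)
    (hmono : StrictMonoOn δ (Set.Ioi (-dInf)))
    (hconc : ConcaveOn ℝ (Set.Ioi (-dInf)) δ)
    (hdiff : DifferentiableOn ℝ δ (Set.Ioi (-dInf)))
    (hmap : Set.MapsTo δ (Set.Ioi (-dInf)) (Set.Iio dInf))
    (hinv : ∀ T ∈ Set.Ioi (-dInf), -δ (-δ T) = T)
    (h0 : 0 < δ 0)
    (hlim : Filter.Tendsto δ Filter.atTop (nhds dInf))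
    (hfix : δ (-m) = m)
    (g : ℝ → ℝ) (hg : ∀ x, g x = x - dInf + δ (x - dInf)) :
    StrictMonoOn g (Set.Ioo (dInf - m) dInf) ∧
    DifferentiableOn ℝ g (Set.Ioo (dInf - m) dInf) ∧
    (∀ x ∈ Set.Ioo (dInf - m) dInf, 1 + deriv δ 0 ≤ deriv g x) ∧
    Filter.Tendsto g (nhdsWithin (dInf - m) (Set.Ioi (dInf - m))) (nhds 0) ∧
    Filter.Tendsto g (nhdsWithin dInf (Set.Iio dInf)) (nhds (δ 0)) ∧
    (∀ v ∈ Set.Ioo 0 (δ 0), ∃! x : ℝ, x ∈ Set.Ioo (dInf - m) dInf ∧ g x = v) :=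
  stmt_17_general δ dInf m hm0 hmd hmono hconc hdiff hfix g hg
end
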